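/- For α ∈ (0,1) and 0 ≤ y < p, define M_{1,α}(p,y) = (1/Γ(1-α)) ∫_y^p (1 - p^{-2/α} μ^{2/α})^{-α} dμ. Then lim_{α → 1⁻} M_{1,α}(p,y) = p/2 for all 0 ≤ y < p. -/

import Mathlib

/-!
The substitution `μ = p q^{α/2}` turns the integral into `(pα/2) ∫_c^1 q^{α/2-1} (1-q)^{-α} dq`
with `c = (y/p)^{2/α}`. The complete Beta integral `B(α/2, 1-α)` contributes
`p Γ(1+α/2)/Γ(1-α/2) → p Γ(3/2)/Γ(1/2) = p/2`. Since `c ≤ (y/p)^2 < 1`, the integral over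
`[0, c]` times `pα/2` stays bounded by `y / (1 - (y/p)^2)` uniformly in `α`, and is killed by
the factor `1/Γ(1-α) → 0`.
-/

open Real MeasureTheory intervalIntegral Set Filter Topology

/-- `M_{1,α}(p,y) = (1/Γ(1-α)) ∫_y^p (1 - p^{-2/α} μ^{2/α})^{-α} dμ`. -/
noncomputable def MoneA (α p y : ℝ) : ℝ :=
  (1 / Real.Gamma (1 - α)) * ∫ μ in y..p, (1 - p ^ (-(2/α)) * μ ^ (2/α)) ^ (-α)

theorem integral_comp_rpow_of_nonneg {E : Type*} [NormedAddCommGroup E] [NormedSpace ℝ E]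
    {s a b : ℝ} (hs : 0 < s) (ha : 0 ≤ a) (hab : a ≤ b) (g : ℝ → E) :
    ∫ q in a..b, (s * q ^ (s - 1)) • g (q ^ s) = ∫ t in a ^ s..b ^ s, g t := by
  have himage : (· ^ s) '' Ioo a b = Ioo (a ^ s) (b ^ s) :=
    (continuousOn_id.rpow_const fun _ _ => Or.inr hs.le).image_Ioo_of_strictMonoOn hab
      ((strictMonoOn_rpow_Ici_of_exponent_pos hs).mono fun x hx => ha.trans hx.1)
  rw [integral_of_le hab, integral_of_le (rpow_le_rpow ha hab hs.le),
    integral_Ioc_eq_integral_Ioo, integral_Ioc_eq_integral_Ioo, ← himage,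
    integral_image_eq_integral_deriv_smul_of_monotoneOn measurableSet_Ioo
      (fun x hx => (hasDerivAt_rpow_const (Or.inl (ha.trans_lt hx.1).ne')).hasDerivWithinAt)
      ((strictMonoOn_rpow_Ici_of_exponent_pos hs).monotoneOn.mono fun x hx => ha.trans hx.1.le)]

/-- Since Mathlib sets `Gamma (-n) = 0` at the poles, `(Gamma x)⁻¹` is the entire `1/Γ`. -/
theorem continuous_inv_Gamma : Continuous fun x : ℝ => (Gamma x)⁻¹ := by
  have hre : (fun x : ℝ => (Gamma x)⁻¹) = fun x : ℝ => ((Complex.Gamma x)⁻¹).re := by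
    ext x; rw [Complex.Gamma_ofReal, ← Complex.ofReal_inv, Complex.ofReal_re]
  rw [hre]
  exact Complex.continuous_re.comp
    (Complex.differentiable_one_div_Gamma.continuous.comp Complex.continuous_ofReal)

noncomputable def incompleteBeta (x a b : ℝ) : ℝ :=
  ∫ t in (0:ℝ)..x, t ^ (a - 1) * (1 - t) ^ (b - 1)

theorem betaIntegrand_ofReal {a b t : ℝ} (ht : t ∈ Icc (0:ℝ) 1) :
    (t : ℂ) ^ ((a : ℂ) - 1) * (1 - (t : ℂ)) ^ ((b : ℂ) - 1)
      = ((t ^ (a - 1) * (1 - t) ^ (b - 1) : ℝ) : ℂ) := by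
  rw [Complex.ofReal_mul, Complex.ofReal_cpow ht.1, Complex.ofReal_cpow (sub_nonneg.2 ht.2)]
  push_cast; rfl

theorem intervalIntegrable_betaIntegrand {a b : ℝ} (ha : 0 < a) (hb : 0 < b) :
    IntervalIntegrable (fun t : ℝ => t ^ (a - 1) * (1 - t) ^ (b - 1)) volume 0 1 := by
  have h := (Complex.betaIntegral_convergent (u := a) (v := b) (by simpa) (by simpa)).norm
  refine (intervalIntegrable_congr fun t ht => ?_).1 h
  rw [uIoc_of_le zero_le_one] at ht
  have ht : t ∈ Icc (0:ℝ) 1 := Ioc_subset_Icc_self ht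
  rw [betaIntegrand_ofReal ht, Complex.norm_real, Real.norm_of_nonneg
    (mul_nonneg (rpow_nonneg ht.1 _) (rpow_nonneg (sub_nonneg.2 ht.2) _))]

theorem incompleteBeta_one {a b : ℝ} (ha : 0 < a) (hb : 0 < b) :
    incompleteBeta 1 a b = Gamma a * Gamma b / Gamma (a + b) := by
  rw [← ProbabilityTheory.beta, ProbabilityTheory.beta_eq_betaIntegralReal a b ha hb,
    Complex.betaIntegral, incompleteBeta, ← Complex.ofReal_re (∫ t in (0:ℝ)..1, _),
    ← integral_ofReal]
  congr 1
  refine integral_congr fun t ht => ?_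
  rw [uIcc_of_le zero_le_one] at ht
  exact (betaIntegrand_ofReal ht).symm

theorem incompleteBeta_nonneg {c : ℝ} (a b : ℝ) (hc0 : 0 ≤ c) (hc1 : c ≤ 1) :
    0 ≤ incompleteBeta c a b :=
  integral_nonneg hc0 fun t ht =>
    mul_nonneg (rpow_nonneg ht.1 _) (rpow_nonneg (by linarith [ht.2]) _)

theorem incompleteBeta_le {a b c : ℝ} (ha : 0 < a) (hb : 0 < b) (hc0 : 0 ≤ c) (hc1 : c < 1) :
    incompleteBeta c a b ≤ c ^ a / a / (1 - c) := by
  have hint : IntervalIntegrable (fun t : ℝ => t ^ (a - 1) * (1 - t) ^ (b - 1)) volume 0 c :=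
    (intervalIntegrable_betaIntegrand ha hb).mono_set <| by
      rw [uIcc_of_le hc0, uIcc_of_le zero_le_one]; exact Icc_subset_Icc_right hc1.le
  calc incompleteBeta c a b ≤ ∫ t in (0:ℝ)..c, t ^ (a - 1) * (1 - c)⁻¹ := by
        refine integral_mono_on hc0 hint
          ((intervalIntegral.intervalIntegrable_rpow' (by linarith)).mul_const _) fun t ht => ?_
        have h1t : 0 < 1 - t := by linarith [ht.2]
        refine mul_le_mul_of_nonneg_left ?_ (rpow_nonneg ht.1 _)
        calc (1 - t) ^ (b - 1) ≤ (1 - t) ^ (-1 : ℝ) :=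
              rpow_le_rpow_of_exponent_ge h1t (by linarith [ht.1]) (by linarith)
          _ ≤ (1 - c)⁻¹ := by
              rw [rpow_neg_one]; exact inv_anti₀ (by linarith) (by linarith [ht.2])
    _ = c ^ a / a / (1 - c) := by
        rw [intervalIntegral.integral_mul_const, integral_rpow (Or.inl (by linarith)),
          sub_add_cancel, zero_rpow ha.ne']
        ring

theorem integral_MoneA_eq {α p y : ℝ} (hα : 0 < α) (hy : 0 ≤ y) (hyp : y ≤ p) (hp : 0 < p) :
    ∫ μ in y..p, (1 - p ^ (-(2 / α)) * μ ^ (2 / α)) ^ (-α)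
      = p * (α / 2) *
        ∫ q in ((y / p) ^ (2 / α))..1, q ^ (α / 2 - 1) * (1 - q) ^ (1 - α - 1) := by
  set c := (y / p) ^ (2 / α)
  have hyp' : 0 ≤ y / p := div_nonneg hy hp.le
  have hc1 : c ≤ 1 := rpow_le_one hyp' (div_le_one_of_le₀ hyp hp.le) (by positivity)
  have hcα : c ^ (α / 2) = y / p := by rw [← inv_div, rpow_rpow_inv hyp' (by positivity)]
  set G : ℝ → ℝ := fun t => (1 - t ^ (2 / α)) ^ (-α)
  calc ∫ μ in y..p, (1 - p ^ (-(2 / α)) * μ ^ (2 / α)) ^ (-α)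
      = ∫ μ in y..p, G (μ / p) := by
        refine integral_congr fun μ hμ => ?_
        rw [uIcc_of_le hyp] at hμ
        simp only [G, div_rpow (hy.trans hμ.1) hp.le, rpow_neg hp.le]
        ring_nf
    _ = p * ∫ t in c ^ (α / 2)..1 ^ (α / 2), G t := by
        rw [integral_comp_div G hp.ne', div_self hp.ne', smul_eq_mul, hcα, one_rpow]
    _ = p * ∫ q in c..1, (α / 2 * q ^ (α / 2 - 1)) • G (q ^ (α / 2)) := by
        rw [integral_comp_rpow_of_nonneg (by positivity) (by positivity) hc1]
    _ = p * (α / 2) * ∫ q in c..1, q ^ (α / 2 - 1) * (1 - q) ^ (1 - α - 1) := by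
        rw [mul_assoc, ← intervalIntegral.integral_const_mul (α / 2)]
        congr 1
        refine integral_congr fun q hq => ?_
        rw [uIcc_of_le hc1] at hq
        have hq0 : 0 ≤ q := hq.1.trans' (by positivity)
        have hqα : (q ^ (α / 2)) ^ (2 / α) = q := by
          rw [← inv_div, rpow_inv_rpow hq0 (by positivity)]
        simp only [G, smul_eq_mul, hqα, sub_sub_cancel_left]
        ring

theorem MoneA_eq_Gamma_sub_incompleteBeta {α p y : ℝ} (hα0 : 0 < α) (hα1 : α < 1) (hy : 0 ≤ y)
    (hyp : y < p) :
    MoneA α p y = p * (Gamma (1 + α / 2) / Gamma (1 - α / 2))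
      - 1 / Gamma (1 - α) *
        (p * (α / 2) * incompleteBeta ((y / p) ^ (2 / α)) (α / 2) (1 - α)) := by
  have hp : 0 < p := hy.trans_lt hyp
  set c := (y / p) ^ (2 / α)
  have hc0 : 0 ≤ c := by positivity
  have hc1 : c ≤ 1 :=
    rpow_le_one (by positivity) (div_le_one_of_le₀ hyp.le hp.le) (by positivity)
  have hI :=
    intervalIntegrable_betaIntegrand (a := α / 2) (b := 1 - α) (by positivity) (by linarith)
  have hsplit : ∫ q in c..1, q ^ (α / 2 - 1) * (1 - q) ^ (1 - α - 1)
      = incompleteBeta 1 (α / 2) (1 - α) - incompleteBeta c (α / 2) (1 - α) :=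
    (integral_interval_sub_left hI (hI.mono_set (by
      rw [uIcc_of_le hc0, uIcc_of_le zero_le_one]; exact Icc_subset_Icc_right hc1))).symm
  have hGamma : Gamma (1 + α / 2) = α / 2 * Gamma (α / 2) := by
    rw [add_comm, Gamma_add_one (by positivity)]
  have hGamma1 : Gamma (1 - α) ≠ 0 := (Gamma_pos_of_pos (by linarith)).ne'
  rw [MoneA, integral_MoneA_eq hα0 hy hyp.le hp, hsplit,
    incompleteBeta_one (by positivity) (by linarith), show α / 2 + (1 - α) = 1 - α / 2 by ring,
    hGamma]
  field_simp

theorem tendsto_Gamma_one_add_half_div_Gamma_one_sub_half :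
    Tendsto (fun α => Gamma (1 + α / 2) / Gamma (1 - α / 2)) (𝓝 1) (𝓝 (1 / 2)) := by
  have hcont : ∀ s : ℝ, 0 < s → ContinuousAt Gamma s := fun s hs =>
    (differentiableOn_Gamma_Ioi.differentiableAt (Ioi_mem_nhds hs)).continuousAt
  have hval : Gamma (1 + 1 / 2) / Gamma (1 - 1 / 2) = 1 / 2 := by
    rw [show (1:ℝ) - 1 / 2 = 1 / 2 by norm_num, add_comm, Gamma_add_one (by norm_num),
      mul_div_assoc, div_self (Gamma_pos_of_pos (by norm_num)).ne', mul_one]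
  rw [← hval]
  refine ContinuousAt.tendsto (ContinuousAt.div ?_ ?_ (Gamma_pos_of_pos (by norm_num)).ne')
  · exact (hcont _ (by norm_num)).comp (f := fun α : ℝ => 1 + α / 2) (by fun_prop)
  · exact (hcont _ (by norm_num)).comp (f := fun α : ℝ => 1 - α / 2) (by fun_prop)

theorem tendsto_inv_Gamma_nhds_zero : Tendsto (fun x : ℝ => (Gamma x)⁻¹) (𝓝 0) (𝓝 0) := by
  simpa [Gamma_zero] using continuous_inv_Gamma.tendsto 0

theorem mul_incompleteBeta_le {α p y : ℝ} (hα0 : 0 < α) (hα1 : α < 1) (hy : 0 ≤ y)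
    (hyp : y < p) :
    p * (α / 2) * incompleteBeta ((y / p) ^ (2 / α)) (α / 2) (1 - α)
      ≤ y / (1 - (y / p) ^ (2:ℝ)) := by
  have hp : 0 < p := hy.trans_lt hyp
  have hyp0 : 0 ≤ y / p := by positivity
  have hyp1 : y / p < 1 := (div_lt_one hp).2 hyp
  set c := (y / p) ^ (2 / α)
  have hcS : c ≤ (y / p) ^ (2:ℝ) :=
    rpow_le_rpow_of_exponent_ge' hyp0 hyp1.le two_pos.le (by rw [le_div_iff₀ hα0]; linarith)
  have hS : (y / p) ^ (2:ℝ) < 1 := rpow_lt_one hyp0 hyp1 two_pos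
  have hcα : c ^ (α / 2) = y / p := by rw [← inv_div, rpow_rpow_inv hyp0 (by positivity)]
  calc p * (α / 2) * incompleteBeta c (α / 2) (1 - α)
      ≤ p * (α / 2) * (c ^ (α / 2) / (α / 2) / (1 - c)) := by
        gcongr
        exact incompleteBeta_le (by positivity) (by linarith) (by positivity) (hcS.trans_lt hS)
    _ = y / (1 - c) := by
        rw [hcα]; field_simp
    _ ≤ y / (1 - (y / p) ^ (2:ℝ)) := by
        gcongr

theorem tendsto_MoneA_remainder {p y : ℝ} (hy : 0 ≤ y) (hyp : y < p) :
    Tendsto (fun α => 1 / Gamma (1 - α) *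
      (p * (α / 2) * incompleteBeta ((y / p) ^ (2 / α)) (α / 2) (1 - α))) (𝓝[<] 1) (𝓝 0) := by
  have hp : 0 < p := hy.trans_lt hyp
  have hGamma : Tendsto (fun α : ℝ => 1 / Gamma (1 - α)) (𝓝[<] 1) (𝓝 0) := by
    simp only [one_div]
    refine tendsto_inv_Gamma_nhds_zero.comp (tendsto_nhdsWithin_of_tendsto_nhds ?_)
    simpa using (continuous_sub_left (1:ℝ)).tendsto 1
  have hbounds : ∀ α ∈ Ioo (0:ℝ) 1, 0 ≤ 1 / Gamma (1 - α) ∧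
      0 ≤ p * (α / 2) * incompleteBeta ((y / p) ^ (2 / α)) (α / 2) (1 - α) := by
    rintro α ⟨hα0, hα1⟩
    have := Gamma_pos_of_pos (sub_pos.2 hα1)
    refine ⟨by positivity, mul_nonneg (by positivity) (incompleteBeta_nonneg _ _ (by positivity)
      (rpow_le_one (by positivity) (div_le_one_of_le₀ hyp.le hp.le) (by positivity)))⟩
  have hbound := hGamma.mul_const (y / (1 - (y / p) ^ (2:ℝ)))
  rw [zero_mul] at hbound
  refine squeeze_zero' ?_ ?_ hbound
  · filter_upwards [Ioo_mem_nhdsLT zero_lt_one] with α hα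
    exact mul_nonneg (hbounds α hα).1 (hbounds α hα).2
  · filter_upwards [Ioo_mem_nhdsLT zero_lt_one] with α hα
    exact mul_le_mul_of_nonneg_left (mul_incompleteBeta_le hα.1 hα.2 hy hyp) (hbounds α hα).1

/-- For `0 ≤ y < p`, `M_{1,α}(p,y) → p/2` as `α → 1⁻`. -/
theorem stmt10 (p y : ℝ) (hy : 0 ≤ y) (hyp : y < p) :
    Tendsto (fun α => MoneA α p y) (𝓝[<] (1:ℝ)) (𝓝 (p / 2)) := by
  have hmain : Tendsto (fun α => p * (Gamma (1 + α / 2) / Gamma (1 - α / 2))) (𝓝[<] 1)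
      (𝓝 (p / 2)) := by
    simpa [div_eq_mul_one_div p 2] using
      (tendsto_Gamma_one_add_half_div_Gamma_one_sub_half.const_mul p).mono_left nhdsWithin_le_nhds
  have hlim := hmain.sub (tendsto_MoneA_remainder hy hyp)
  rw [sub_zero] at hlim
  refine hlim.congr' ?_
  filter_upwards [Ioo_mem_nhdsLT zero_lt_one] with α ⟨hα0, hα1⟩
  exact (MoneA_eq_Gamma_sub_incompleteBeta hα0 hα1 hy hyp).symm
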